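/- Let G be an MP-tree and let M_G be its multipath matroid. Then for every integer k ≥ 0, k · T_{M_G}(1-k, 0) = (-1)^{r(G)} · τ_G(k), where r(G) is the rank of E(G) in M_G and τ_G(k) is the number of flowing k-colourings of G. -/

import Mathlib

set_option autoImplicit false

noncomputable section

attribute [local instance] Classical.propDecidable

/-- A (finite) directed multigraph: finitely many vertices and edges, each edge
has a source and a target.  (Loops and, a priori, parallel edges are allowed;
the paper's convention of at most one edge between an ordered pair of distinct
vertices is imposed via `DiGraph.EdgeUnique`.) -/
structure DiGraph where
  V : Type
  E : Type
  [fintV : Fintype V]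
  [decV : DecidableEq V]
  [fintE : Fintype E]
  [decE : DecidableEq E]
  s : E → V
  t : E → V

attribute [instance] DiGraph.fintV DiGraph.decV DiGraph.fintE DiGraph.decE

namespace DiGraph

/-- For each ordered pair of *distinct* vertices there is at most one edge. -/
def EdgeUnique (G : DiGraph) : Prop :=
  ∀ e f : G.E, G.s e = G.s f → G.t e = G.t f → G.s e ≠ G.t e → e = f

/-- G has no loops. -/
def Loopless (G : DiGraph) : Prop := ∀ e : G.E, G.s e ≠ G.t e

/-- A coherently oriented cycle, given as the (cyclically ordered) list of its
edges: the list is nonempty, has no repeated edges, visits no vertex twice,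
and the target of each edge is the source of the next one (cyclically).
A loop is a coherently oriented cycle of length 1. -/
def IsCohCycle (G : DiGraph) (c : List G.E) : Prop :=
  c ≠ [] ∧ c.Nodup ∧ (c.map G.s).Nodup ∧
    ∀ i : Fin c.length,
      G.t (c.get i) =
        G.s (c.get ⟨(i.val + 1) % c.length,
          Nat.mod_lt _ (Nat.lt_of_le_of_lt (Nat.zero_le _) i.isLt)⟩)

/-- `m` is (the edge set of) a multipath of `G`: the corresponding spanning
subgraph has no loops, in-degree and out-degree at most one at each vertex, and
contains no coherently oriented cycle; equivalently, every connected component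
is a single vertex or a simple (directed) path. -/
def IsMultipath (G : DiGraph) (m : Finset G.E) : Prop :=
  (∀ e ∈ m, G.s e ≠ G.t e) ∧
  (∀ e ∈ m, ∀ f ∈ m, G.s e = G.s f → e = f) ∧
  (∀ e ∈ m, ∀ f ∈ m, G.t e = G.t f → e = f) ∧
  ¬∃ c : List G.E, IsCohCycle G c ∧ ∀ g ∈ c, g ∈ m

/-- The forbidden pattern (A): vertices v0,v1,v2 and edges (v1,v0), (v0,v2), (v1,v2). -/
def HasPatternA (G : DiGraph) : Prop :=
  ∃ v0 v1 v2 : G.V, v0 ≠ v1 ∧ v0 ≠ v2 ∧ v1 ≠ v2 ∧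
    (∃ e : G.E, G.s e = v1 ∧ G.t e = v0) ∧
    (∃ e : G.E, G.s e = v0 ∧ G.t e = v2) ∧
    (∃ e : G.E, G.s e = v1 ∧ G.t e = v2)

/-- The reverse of pattern (A). -/
def HasPatternArev (G : DiGraph) : Prop :=
  ∃ v0 v1 v2 : G.V, v0 ≠ v1 ∧ v0 ≠ v2 ∧ v1 ≠ v2 ∧
    (∃ e : G.E, G.s e = v0 ∧ G.t e = v1) ∧
    (∃ e : G.E, G.s e = v2 ∧ G.t e = v0) ∧
    (∃ e : G.E, G.s e = v2 ∧ G.t e = v1)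

/-- The forbidden pattern (B): vertices v0,v1,v2,v3 and edges (v0,v1), (v2,v1), (v2,v3). -/
def HasPatternB (G : DiGraph) : Prop :=
  ∃ v0 v1 v2 v3 : G.V,
    v0 ≠ v1 ∧ v0 ≠ v2 ∧ v0 ≠ v3 ∧ v1 ≠ v2 ∧ v1 ≠ v3 ∧ v2 ≠ v3 ∧
    (∃ e : G.E, G.s e = v0 ∧ G.t e = v1) ∧
    (∃ e : G.E, G.s e = v2 ∧ G.t e = v1) ∧
    (∃ e : G.E, G.s e = v2 ∧ G.t e = v3)

/-- The reverse of pattern (B). -/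
def HasPatternBrev (G : DiGraph) : Prop :=
  ∃ v0 v1 v2 v3 : G.V,
    v0 ≠ v1 ∧ v0 ≠ v2 ∧ v0 ≠ v3 ∧ v1 ≠ v2 ∧ v1 ≠ v3 ∧ v2 ≠ v3 ∧
    (∃ e : G.E, G.s e = v1 ∧ G.t e = v0) ∧
    (∃ e : G.E, G.s e = v1 ∧ G.t e = v2) ∧
    (∃ e : G.E, G.s e = v3 ∧ G.t e = v2)

/-- (MP1): G contains no copy, up to reversing all orientations, of the
patterns (A) and (B). -/
def MP1 (G : DiGraph) : Prop :=
  ¬HasPatternA G ∧ ¬HasPatternArev G ∧ ¬HasPatternB G ∧ ¬HasPatternBrev G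

/-- (MP2): every coherently oriented cycle of length ≥ 2 (i.e. loops excluded)
is a connected component: any edge incident to a vertex of the cycle belongs
to the cycle. -/
def MP2 (G : DiGraph) : Prop :=
  ∀ c : List G.E, IsCohCycle G c → 2 ≤ c.length →
    ∀ f : G.E, (∃ g ∈ c, G.s g = G.s f ∨ G.s g = G.t f) → f ∈ c

def IsMPDigraph (G : DiGraph) : Prop := MP1 G ∧ MP2 G

/-- The axioms (I1), (I2), (I3) for a family of independent sets of a matroid. -/
def IsIndepFamily {α : Type} [DecidableEq α] (I : Finset α → Prop) : Prop :=
  I ∅ ∧ (∀ A B : Finset α, I A → B ⊆ A → I B) ∧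
    ∀ A B : Finset α, I A → I B → B.card < A.card →
      ∃ x ∈ A, x ∉ B ∧ I (insert x B)

/-- `m` is the edge set of a linear sink (two non-loop edges with a common
target and distinct sources). -/
def IsLinearSinkSet (G : DiGraph) (m : Finset G.E) : Prop :=
  ∃ e1 e2 : G.E, e1 ≠ e2 ∧ m = {e1, e2} ∧ G.t e1 = G.t e2 ∧
    G.s e1 ≠ G.s e2 ∧ G.s e1 ≠ G.t e1 ∧ G.s e2 ≠ G.t e2

/-- `m` is the edge set of a linear source (two non-loop edges with a common
source and distinct targets). -/
def IsLinearSourceSet (G : DiGraph) (m : Finset G.E) : Prop :=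
  ∃ e1 e2 : G.E, e1 ≠ e2 ∧ m = {e1, e2} ∧ G.s e1 = G.s e2 ∧
    G.t e1 ≠ G.t e2 ∧ G.s e1 ≠ G.t e1 ∧ G.s e2 ≠ G.t e2

/-- `m` is the edge set of a coherently oriented cycle (possibly a loop). -/
def IsCohCycleSet (G : DiGraph) (m : Finset G.E) : Prop :=
  ∃ c : List G.E, IsCohCycle G c ∧ m = c.toFinset

/-- Two vertices are adjacent if they are the endpoints of a common edge. -/
def adj (G : DiGraph) (v w : G.V) : Prop :=
  ∃ e : G.E, (G.s e = v ∧ G.t e = w) ∨ (G.s e = w ∧ G.t e = v)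

/-- Two vertices lie in the same connected component. -/
def connRel (G : DiGraph) : G.V → G.V → Prop := Relation.EqvGen (adj G)

/-- G is connected. -/
def ConnectedD (G : DiGraph) : Prop := Nonempty G.V ∧ ∀ v w : G.V, connRel G v w

/-- The number of connected components of G (isolated vertices count). -/
def numComponents (G : DiGraph) : ℕ :=
  Nat.card (Quotient (Relation.EqvGen.setoid (adj G)))

/-- `S` is the set of edges of one of the connected components of `G`. -/
def IsComponentEdges (G : DiGraph) (S : Finset G.E) : Prop :=
  ∃ v : G.V, S = Finset.univ.filter (fun e => connRel G v (G.s e))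

/-- in-degree of `v` in the subgraph spanned by the edges of `R`. -/
def indegIn (G : DiGraph) (R : Finset G.E) (v : G.V) : ℕ :=
  (R.filter (fun e => G.t e = v)).card

/-- out-degree of `v` in the subgraph spanned by the edges of `R`. -/
def outdegIn (G : DiGraph) (R : Finset G.E) (v : G.V) : ℕ :=
  (R.filter (fun e => G.s e = v)).card

def indeg (G : DiGraph) (v : G.V) : ℕ := indegIn G Finset.univ v
def outdeg (G : DiGraph) (v : G.V) : ℕ := outdegIn G Finset.univ v

/-- `v` is a vertex of the subgraph spanned by the edge set `R`. -/
def IncidentTo (G : DiGraph) (R : Finset G.E) (v : G.V) : Prop :=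
  ∃ e ∈ R, G.s e = v ∨ G.t e = v

/-- `v` is stable in the subgraph spanned by `R`. -/
def StableIn (G : DiGraph) (R : Finset G.E) (v : G.V) : Prop :=
  indegIn G R v = 0 ∨ outdegIn G R v = 0

/-- `v` is unstable in `G`. -/
def UnstableG (G : DiGraph) (v : G.V) : Prop :=
  0 < indeg G v ∧ 0 < outdeg G v

/-- adjacency within the subgraph spanned by `R`. -/
def adjIn (G : DiGraph) (R : Finset G.E) (a b : G.V) : Prop :=
  ∃ g ∈ R, (G.s g = a ∧ G.t g = b) ∨ (G.s g = b ∧ G.t g = a)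

/-- The subgraph spanned by the edge set `R` is connected. -/
def EdgeConnected (G : DiGraph) (R : Finset G.E) : Prop :=
  ∀ e ∈ R, ∀ f ∈ R, Relation.EqvGen (adjIn G R) (G.s e) (G.s f)

/-- `R` spans a dynamical region of `G`: it is connected, has at least one
edge, every boundary vertex is unstable in `G` but stable in `R` and in its
complement, and no edge of `R` lies on an oriented cycle of `G` not contained
in `R`. -/
def IsDynRegion (G : DiGraph) (R : Finset G.E) : Prop :=
  R.Nonempty ∧ EdgeConnected G R ∧
  (∀ v : G.V, IncidentTo G R v → IncidentTo G (Finset.univ \ R) v →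
     UnstableG G v ∧ StableIn G R v ∧ StableIn G (Finset.univ \ R) v) ∧
  (∀ c : List G.E, IsCohCycle G c → (∃ g ∈ c, g ∈ R) → ∀ g ∈ c, g ∈ R)

/-- A dynamical module is a minimal dynamical region. -/
def IsDynModule (G : DiGraph) (R : Finset G.E) : Prop :=
  IsDynRegion G R ∧ ∀ R' ⊆ R, IsDynRegion G R' → R' = R

/-- `G` is a sink on `n+1` vertices. -/
def IsSinkGraph (G : DiGraph) : Prop :=
  Loopless G ∧ Fintype.card G.V = Fintype.card G.E + 1 ∧
    ∃! v : G.V, ∀ e : G.E, G.t e = v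

/-- `G` is a source on `n+1` vertices. -/
def IsSourceGraph (G : DiGraph) : Prop :=
  Loopless G ∧ Fintype.card G.V = Fintype.card G.E + 1 ∧
    ∃! v : G.V, ∀ e : G.E, G.s e = v

/-- `R` spans a sink: all its edges are non-loops with a common target and
pairwise distinct sources. -/
def IsSinkSet (G : DiGraph) (R : Finset G.E) : Prop :=
  ∃ v : G.V, (∀ e ∈ R, G.t e = v ∧ G.s e ≠ v) ∧
    ∀ e ∈ R, ∀ f ∈ R, G.s e = G.s f → e = f

/-- `R` spans a source. -/
def IsSourceSet (G : DiGraph) (R : Finset G.E) : Prop :=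
  ∃ v : G.V, (∀ e ∈ R, G.s e = v ∧ G.t e ≠ v) ∧
    ∀ e ∈ R, ∀ f ∈ R, G.t e = G.t f → e = f

/-- The whole digraph `G` is a coherently oriented cycle. -/
def IsCohCycleGraph (G : DiGraph) : Prop :=
  ∃ c : List G.E, IsCohCycle G c ∧ (∀ e : G.E, e ∈ c) ∧
    ∀ v : G.V, ∃ g ∈ c, G.s g = v

/-- Rank function of the multipath matroid: the size of a largest multipath
contained in `A`. -/
def mrank (G : DiGraph) (A : Finset G.E) : ℕ :=
  (A.powerset.filter (fun m => IsMultipath G m)).sup Finset.card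

/-- The Tutte polynomial of the multipath matroid of `G`, evaluated at `(x,y)`. -/
def tutte (G : DiGraph) (x y : ℤ) : ℤ :=
  ∑ A : Finset G.E,
    (x - 1) ^ (mrank G Finset.univ - mrank G A) *
      (y - 1) ^ (A.card - mrank G A)

/-- `e` is a loop of the multipath matroid. -/
def IsMatroidLoop (G : DiGraph) (e : G.E) : Prop := ¬IsMultipath G {e}

/-- `e` is a coloop of the multipath matroid: it belongs to every maximal
independent set. -/
def IsColoop (G : DiGraph) (e : G.E) : Prop :=
  ∀ m : Finset G.E, IsMultipath G m →
    (∀ m' : Finset G.E, IsMultipath G m' → m ⊆ m' → m' = m) → e ∈ m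

/-- The digraph obtained from `G` by deleting the edge `e`. -/
def deleteEdge (G : DiGraph) (e : G.E) : DiGraph where
  V := G.V
  E := {f : G.E // f ≠ e}
  s := fun f => G.s f.val
  t := fun f => G.t f.val

/-- The vertex set of the MP-contraction `G ⫽ e`: the vertices of `G` other
than the endpoints of `e`, together with a new vertex `x = Sum.inr ()`. -/
def CVert (G : DiGraph) (e : G.E) : Type :=
  {u : G.V // u ≠ G.s e ∧ u ≠ G.t e} ⊕ Unit

instance (G : DiGraph) (e : G.E) : Fintype (CVert G e) := by
  unfold CVert; infer_instance

instance (G : DiGraph) (e : G.E) : DecidableEq (CVert G e) := by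
  unfold CVert; infer_instance

/-- Source, in `G ⫽ e`, of the edge coming from the edge `f` of `G`
(for `e = (v,w)`, the new source is `x` iff `s f ∈ {v,w}` or `t f = w`). -/
def contrS (G : DiGraph) (e f : G.E) : CVert G e :=
  if h : G.s f = G.s e ∨ G.s f = G.t e ∨ G.t f = G.t e then Sum.inr ()
  else Sum.inl ⟨G.s f, by push_neg at h; exact ⟨h.1, h.2.1⟩⟩

/-- Target, in `G ⫽ e`, of the edge coming from the edge `f` of `G`
(for `e = (v,w)`, the new target is `x` iff `t f ∈ {v,w}` or `s f = v`). -/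
def contrT (G : DiGraph) (e f : G.E) : CVert G e :=
  if h : G.t f = G.s e ∨ G.t f = G.t e ∨ G.s f = G.s e then Sum.inr ()
  else Sum.inl ⟨G.t f, by push_neg at h; exact ⟨h.1, h.2.1⟩⟩

/-- The MP-contraction `G ⫽ e`. -/
def mpContract (G : DiGraph) (e : G.E) : DiGraph where
  V := CVert G e
  E := {f : G.E // f ≠ e}
  s := fun f => contrS G e f.val
  t := fun f => contrT G e f.val

/-- The digraph `C̃_e(G)`: the MP-contraction `G ⫽ e` with all loops at the
new vertex `x` deleted. -/
def tildeC (G : DiGraph) (e : G.E) : DiGraph where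
  V := CVert G e
  E := {f : G.E // f ≠ e ∧
         ¬(contrS G e f = Sum.inr () ∧ contrT G e f = Sum.inr ())}
  s := fun f => contrS G e f.val
  t := fun f => contrT G e f.val

/-- The classical contraction `G / e` of a non-loop edge `e = (v,w)`:
identify `w` with `v` and delete `e`. -/
def contractClassical (G : DiGraph) (e : G.E) (hne : G.s e ≠ G.t e) : DiGraph where
  V := {u : G.V // u ≠ G.t e}
  E := {f : G.E // f ≠ e}
  s := fun f => if h : G.s f.val = G.t e then ⟨G.s e, hne⟩ else ⟨G.s f.val, h⟩
  t := fun f => if h : G.t f.val = G.t e then ⟨G.s e, hne⟩ else ⟨G.t f.val, h⟩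

/-- A flowing k-colouring of `G`. -/
def IsFlowing (G : DiGraph) (k : ℕ) (c : G.V → Fin k) : Prop :=
  (∀ e : G.E, c (G.s e) ≠ c (G.t e)) ∧
  (∀ e f : G.E, G.t e = G.t f → c (G.s e) = c (G.s f)) ∧
  (∀ e f : G.E, G.s e = G.s f → c (G.t e) = c (G.t f))

/-- The number of flowing k-colourings of `G`. -/
def tau (G : DiGraph) (k : ℕ) : ℕ :=
  Nat.card {c : G.V → Fin k // IsFlowing G k c}

/-- The spanning subgraph of `G` with edge set `S`. -/
def subgraphOn (G : DiGraph) (S : Finset G.E) : DiGraph where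
  V := G.V
  E := {f : G.E // f ∈ S}
  s := fun f => G.s f.val
  t := fun f => G.t f.val

/-- The underlying undirected multigraph of `G` contains a cycle
(of length ≥ 1; a single loop, or two parallel/antiparallel edges, count). -/
def HasUndirCycle (G : DiGraph) : Prop :=
  ∃ (n : ℕ) (ed : Fin n → G.E) (vx : Fin n → G.V),
    0 < n ∧ Function.Injective ed ∧ Function.Injective vx ∧
    ∀ i : Fin n,
      (G.s (ed i) = vx i ∧ G.t (ed i) = vx ⟨(i.val + 1) % n, Nat.mod_lt _ i.pos⟩) ∨
      (G.t (ed i) = vx i ∧ G.s (ed i) = vx ⟨(i.val + 1) % n, Nat.mod_lt _ i.pos⟩)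

/-- The underlying undirected multigraph of `G` is a forest. -/
def IsForestD (G : DiGraph) : Prop := ¬HasUndirCycle G

/-- The underlying undirected multigraph of `G` is a tree. -/
def IsTreeD (G : DiGraph) : Prop := ConnectedD G ∧ IsForestD G

/-- The multipath matroid of `G` is representable over the field `F`. -/
def RepOver (G : DiGraph) (F : Type) [Field F] : Prop :=
  ∃ (n : ℕ) (N : Matrix (Fin n) G.E F),
    ∀ m : Finset G.E, IsMultipath G m ↔
      LinearIndependent F (fun f : {x : G.E // x ∈ m} => N.transpose f.val)

end DiGraph

/-- A finite undirected multigraph. -/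
structure Multigraph where
  V : Type
  E : Type
  [fintV : Fintype V]
  [decV : DecidableEq V]
  [fintE : Fintype E]
  [decE : DecidableEq E]
  ends : E → Sym2 V

attribute [instance] Multigraph.fintV Multigraph.decV Multigraph.fintE Multigraph.decE

/-- The multigraph `M` has a cycle all of whose edges lie in `F`. -/
def Multigraph.HasCycleIn (M : Multigraph) (F : Finset M.E) : Prop :=
  ∃ (n : ℕ) (ed : Fin n → M.E) (vx : Fin n → M.V),
    0 < n ∧ Function.Injective ed ∧ Function.Injective vx ∧
    (∀ i : Fin n, ed i ∈ F) ∧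
    ∀ i : Fin n, M.ends (ed i) = s(vx i, vx ⟨(i.val + 1) % n, Nat.mod_lt _ i.pos⟩)

/-!
In a forest without pattern (B), no edge shares its target with a second edge and its source
with a third: the outer ends of the other two edges would form pattern (B), a triangle, or a
pair of parallel edges. So "equal, or sharing a source, or sharing a target" is an equivalence
relation on edges, and the multipaths are exactly the edge sets meeting each class at most once:
`M_G` is the partition matroid with capacity one per class, its rank `N` is the number of
classes, and `T(x, 0)` factorises over the classes as `x ^ N`. On the colouring side, removing a
leaf `w` of the tree multiplies `τ_G(k)` by `k - 1` if the leaf edge is alone in its class, and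
leaves it unchanged otherwise (the colour of `w` is then forced), so `τ_G(k) = k (k - 1) ^ N`
while `k T(1 - k, 0) = k (1 - k) ^ N`.
-/

namespace Finset

variable {α β γ R : Type*}

theorem card_image_eq_of_eq_iff [DecidableEq β] [DecidableEq γ] {s : Finset α} {f : α → β}
    {g : α → γ} (h : ∀ a ∈ s, ∀ b ∈ s, f a = f b ↔ g a = g b) :
    #(s.image f) = #(s.image g) := by
  set P := s.image fun a => (f a, g a)
  have hf : Set.InjOn Prod.fst (P : Set (β × γ)) := by
    simp only [P, coe_image]
    rintro _ ⟨a, ha, rfl⟩ _ ⟨b, hb, rfl⟩ hab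
    exact Prod.ext hab ((h a ha b hb).1 hab)
  have hg : Set.InjOn Prod.snd (P : Set (β × γ)) := by
    simp only [P, coe_image]
    rintro _ ⟨a, ha, rfl⟩ _ ⟨b, hb, rfl⟩ hab
    exact Prod.ext ((h a ha b hb).2 hab) hab
  calc #(s.image f) = #(P.image Prod.fst) := by rw [image_image]; rfl
    _ = #(P.image Prod.snd) := by rw [card_image_of_injOn hf, card_image_of_injOn hg]
    _ = #(s.image g) := by rw [image_image]; rfl

theorem sup_card_filter_injOn_eq_card_image [DecidableEq β] (f : α → β) (A : Finset α) :
    (A.powerset.filter fun m : Finset α => Set.InjOn f m).sup card = #(A.image f) := by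
  refine le_antisymm (Finset.sup_le fun m hm => ?_) ?_
  · rw [mem_filter, mem_powerset] at hm
    rw [← card_image_of_injOn hm.2]
    exact card_le_card (image_subset_image hm.1)
  · obtain ⟨u, huA, hinj, himage⟩ :=
      exists_subset_injOn_image_eq_of_surjOn (A : Set α) (A.image f)
        (by rw [coe_image]; exact Set.surjOn_image f A)
    rw [← himage, card_image_of_injOn hinj]
    exact le_sup (mem_filter.2 ⟨mem_powerset.2 (mod_cast huA), hinj⟩)

theorem sum_powerset_sup_prod_inter [DecidableEq α] [CommSemiring R] {K : Finset (Finset α)}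
    (hK : (K : Set (Finset α)).PairwiseDisjoint id) (g : Finset α → R) :
    ∑ A ∈ (K.sup id).powerset, ∏ C ∈ K, g (A ∩ C) = ∏ C ∈ K, ∑ B ∈ C.powerset, g B := by
  induction K using Finset.induction_on with
  | empty => simp
  | @insert C₀ K hC₀ ih =>
    rw [coe_insert, Set.pairwiseDisjoint_insert] at hK
    have hdisj : Disjoint C₀ (K.sup id) :=
      Finset.disjoint_sup_right.2 fun C hC => hK.2 C hC (ne_of_mem_of_not_mem hC hC₀).symm
    have hsub : ∀ C ∈ K, C ⊆ K.sup id := fun C hC => le_sup (f := id) hC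
    rw [sup_insert, id, prod_insert hC₀, ← ih hK.1, sum_mul_sum,
      ← sum_product' (f := fun B A' => g B * ∏ C ∈ K, g (A' ∩ C))]
    refine sum_nbij' (fun A => (A ∩ C₀, A ∩ K.sup id)) (fun p => p.1 ∪ p.2) ?_ ?_ ?_ ?_ ?_
    · intro A _
      simp only [mem_product, mem_powerset]
      exact ⟨inter_subset_right, inter_subset_right⟩
    · rintro ⟨B, A'⟩ hp
      simp only [mem_product, mem_powerset] at hp ⊢
      exact union_subset_union hp.1 hp.2
    · intro A hA
      rw [mem_powerset] at hA
      rw [← inter_union_distrib_left]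
      exact inter_eq_left.2 hA
    · rintro ⟨B, A'⟩ hp
      simp only [mem_product, mem_powerset] at hp
      simp only [union_inter_distrib_right, inter_eq_left.2 hp.1, inter_eq_left.2 hp.2,
        disjoint_iff_inter_eq_empty.1 (hdisj.symm.mono_left hp.2),
        disjoint_iff_inter_eq_empty.1 (hdisj.mono_left hp.1), union_empty, empty_union]
    · intro A _
      rw [prod_insert hC₀]
      refine congrArg _ (prod_congr rfl fun C hC => ?_)
      rw [inter_assoc, inter_eq_right.2 (hsub C hC)]

end Finset

theorem Nat.card_subtype_prod_eq_mul {α β : Type*} [Finite α] [Finite β] (P : β → Prop)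
    (R : β → α → Prop) {m : ℕ} (h : ∀ b, P b → Nat.card {a // R b a} = m) :
    Nat.card {p : α × β // P p.2 ∧ R p.2 p.1} = Nat.card {b // P b} * m := by
  have : Fintype β := Fintype.ofFinite β
  let σ : {p : α × β // P p.2 ∧ R p.2 p.1} ≃ Σ b : {b // P b}, {a // R b a} :=
    { toFun := fun p => ⟨⟨p.1.2, p.2.1⟩, ⟨p.1.1, p.2.2⟩⟩
      invFun := fun q => ⟨(q.2.1, q.1.1), q.1.2, q.2.2⟩
      left_inv := fun _ => rfl
      right_inv := fun _ => rfl }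
  rw [Nat.card_congr σ, Nat.card_sigma, Finset.sum_congr rfl fun b _ => h b.1 b.2,
    Finset.sum_const, Finset.card_univ, smul_eq_mul, Nat.card_eq_fintype_card]

namespace Finpartition

open Finset

variable {α R : Type*} [DecidableEq α] {s : Finset α} (P : Finpartition s)

theorem image_part_eq_filter {A : Finset α} (hA : A ⊆ s) :
    A.image P.part = {C ∈ P.parts | (A ∩ C).Nonempty} := by
  ext C
  simp only [mem_image, mem_filter, Finset.Nonempty, mem_inter]
  constructor
  · rintro ⟨a, ha, rfl⟩
    exact ⟨P.part_mem.2 (hA ha), a, ha, P.mem_part (hA ha)⟩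
  · rintro ⟨hC, a, ha, haC⟩
    exact ⟨a, ha, P.part_eq_of_mem hC haC⟩

theorem image_part_self : s.image P.part = P.parts := by
  rw [P.image_part_eq_filter subset_rfl, filter_true_of_mem fun C hC => ?_]
  rw [inter_eq_right.2 (P.le hC)]
  exact P.nonempty_of_mem_parts hC

theorem sum_card_inter_parts {A : Finset α} (hA : A ⊆ s) : ∑ C ∈ P.parts, #(A ∩ C) = #A := by
  rw [← card_biUnion (t := fun C => A ∩ C) (P.disjoint.mono fun C => inter_subset_right),
    ← inter_biUnion, show P.parts.biUnion (fun C => C) = s from P.biUnion_parts,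
    inter_eq_left.2 hA]

/-- The left-hand side is `T(x, 0)` for the partition matroid of `P` with capacity one per part,
whose rank function is `A ↦ #{C ∈ P.parts | (A ∩ C).Nonempty}`. -/
theorem sum_powerset_tutte_eq_pow [CommRing R] (x : R) :
    ∑ A ∈ s.powerset, (x - 1) ^ (#P.parts - #{C ∈ P.parts | (A ∩ C).Nonempty}) *
      (-1) ^ (#A - #{C ∈ P.parts | (A ∩ C).Nonempty}) = x ^ #P.parts := by
  set g : Finset α → R := fun B => (x - 1) ^ (1 - min 1 #B) * (-1) ^ (#B - min 1 #B)
  have hsummand : ∀ A ∈ s.powerset, (x - 1) ^ (#P.parts - #{C ∈ P.parts | (A ∩ C).Nonempty}) *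
      (-1) ^ (#A - #{C ∈ P.parts | (A ∩ C).Nonempty}) = ∏ C ∈ P.parts, g (A ∩ C) := by
    intro A hA
    have hrank : ∑ C ∈ P.parts, min 1 #(A ∩ C) = #{C ∈ P.parts | (A ∩ C).Nonempty} := by
      rw [card_filter]
      refine sum_congr rfl fun C _ => ?_
      rcases (A ∩ C).eq_empty_or_nonempty with h | h <;> simp [h]
    simp only [g, prod_mul_distrib, prod_pow_eq_pow_sum]
    rw [sum_tsub_distrib _ fun C _ => min_le_left _ _,
      sum_tsub_distrib _ fun C _ => min_le_right _ _, hrank,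
      P.sum_card_inter_parts (mem_powerset.1 hA), sum_const, smul_eq_mul, mul_one]
  have hblock : ∀ C ∈ P.parts, ∑ B ∈ C.powerset, g B = x := by
    intro C hC
    have hterm : ∀ B : Finset α, g B = (if B = ∅ then x else 0) - (-1) ^ #B := by
      intro B
      rcases B.eq_empty_or_nonempty with rfl | hB
      · simp [g]
      · obtain ⟨n, hn⟩ : ∃ n, #B = n + 1 := Nat.exists_eq_succ_of_ne_zero (card_pos.2 hB).ne'
        simp [g, hB.ne_empty, hn, pow_succ]
    have halt : ∑ B ∈ C.powerset, (-1 : R) ^ #B = 0 := by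
      exact_mod_cast congrArg (Int.cast : ℤ → R)
        (sum_powerset_neg_one_pow_card_of_nonempty (P.nonempty_of_mem_parts hC))
    simp [hterm, sum_sub_distrib, halt]
  have hs : s.powerset = (P.parts.sup id).powerset := by rw [P.sup_parts]
  rw [sum_congr rfl hsummand, hs, sum_powerset_sup_prod_inter P.disjoint, prod_congr rfl hblock,
    prod_const]

end Finpartition

namespace DiGraph

open Finset

variable {G : DiGraph}

def Joins (G : DiGraph) (f : G.E) (a b : G.V) : Prop :=
  (G.s f = a ∧ G.t f = b) ∨ (G.t f = a ∧ G.s f = b)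

theorem Joins.eq_and_eq_or_eq_and_eq {f : G.E} {a b c d : G.V} (h : G.Joins f a b)
    (h' : G.Joins f c d) : a = c ∧ b = d ∨ a = d ∧ b = c := by
  rcases h with ⟨rfl, rfl⟩ | ⟨rfl, rfl⟩ <;> rcases h' with ⟨h1, h2⟩ | ⟨h1, h2⟩ <;> tauto

theorem hasUndirCycle_of_joins_two {e f : G.E} {a b : G.V} (hef : e ≠ f) (hab : a ≠ b)
    (he : G.Joins e a b) (hf : G.Joins f b a) : G.HasUndirCycle := by
  refine ⟨2, ![e, f], ![a, b], two_pos, ?_, ?_, fun i => ?_⟩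
  · intro i j h; fin_cases i <;> fin_cases j <;> simp_all [eq_comm]
  · intro i j h; fin_cases i <;> fin_cases j <;> simp_all [eq_comm]
  · fin_cases i
    exacts [he, hf]

theorem hasUndirCycle_of_joins_three {e f g : G.E} {a b c : G.V} (hef : e ≠ f) (heg : e ≠ g)
    (hfg : f ≠ g) (hab : a ≠ b) (hac : a ≠ c) (hbc : b ≠ c) (he : G.Joins e a b)
    (hf : G.Joins f b c) (hg : G.Joins g c a) : G.HasUndirCycle := by
  refine ⟨3, ![e, f, g], ![a, b, c], three_pos, ?_, ?_, fun i => ?_⟩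
  · intro i j h; fin_cases i <;> fin_cases j <;> simp_all [eq_comm]
  · intro i j h; fin_cases i <;> fin_cases j <;> simp_all [eq_comm]
  · fin_cases i
    exacts [he, hf, hg]

theorem IsForestD.loopless (hF : G.IsForestD) : G.Loopless := fun e he =>
  hF ⟨1, fun _ => e, fun _ => G.s e, one_pos, Function.injective_of_subsingleton _,
    Function.injective_of_subsingleton _, fun _ => Or.inl ⟨rfl, he.symm⟩⟩

theorem IsForestD.edgeUnique (hF : G.IsForestD) : G.EdgeUnique := by
  intro e f hs ht hne
  by_contra hef
  exact hF (hasUndirCycle_of_joins_two hef hne (Or.inl ⟨rfl, rfl⟩) (Or.inr ⟨ht.symm, hs.symm⟩))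

theorem IsForestD.not_isCohCycle (hF : G.IsForestD) (c : List G.E) : ¬G.IsCohCycle c := by
  rintro ⟨hne, hnd, hnds, hcyc⟩
  refine hF ⟨c.length, c.get, fun i => G.s (c.get i), List.length_pos_iff.2 hne,
    List.nodup_iff_injective_get.1 hnd, fun i j hij => ?_, fun i => Or.inl ⟨rfl, hcyc i⟩⟩
  have hinj := List.nodup_iff_injective_get.1 hnds
  have := @hinj ⟨i, by simp⟩ ⟨j, by simp⟩ (by simpa using hij)
  exact Fin.ext (by simpa using congrArg Fin.val this)

theorem eq_or_eq_of_target_eq_of_source_eq (hB : ¬G.HasPatternB) (hF : G.IsForestD)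
    {e f g : G.E} (htf : G.t f = G.t e) (hsg : G.s g = G.s e) : f = e ∨ g = e := by
  by_contra! h
  have hl := hF.loopless
  have hfe : G.s f ≠ G.s e := fun hs => h.1 (hF.edgeUnique f e hs htf (hl f))
  have hge : G.t e ≠ G.t g := fun ht => h.2 (hF.edgeUnique g e hsg ht.symm (hl g))
  have hfg : f ≠ g := by rintro rfl; exact hge htf.symm
  have hfe' : G.s f ≠ G.t e := htf ▸ hl f
  have hfg' : G.s f ≠ G.t g := fun hst => hF <|
    hasUndirCycle_of_joins_three h.1 hfg h.2.symm hfe' hfe (hl e).symm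
      (Or.inl ⟨rfl, htf⟩) (Or.inr ⟨rfl, rfl⟩) (Or.inl ⟨hsg, hst.symm⟩)
  exact hB ⟨G.s f, G.t e, G.s e, G.t g, hfe', hfe, hfg', (hl e).symm, hge, hsg ▸ hl g,
    ⟨f, rfl, htf⟩, ⟨e, rfl, rfl⟩, ⟨g, hsg, rfl⟩⟩

def Linked (G : DiGraph) (e f : G.E) : Prop := e = f ∨ G.t e = G.t f ∨ G.s e = G.s f

theorem linked_equivalence (hB : ¬G.HasPatternB) (hF : G.IsForestD) :
    Equivalence G.Linked where
  refl _ := Or.inl rfl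
  symm := by
    rintro e f (h | h | h)
    exacts [Or.inl h.symm, Or.inr (Or.inl h.symm), Or.inr (Or.inr h.symm)]
  trans {e f g} hef hfg := by
    rcases hef with rfl | hef | hef
    · exact hfg
    all_goals rcases hfg with rfl | hfg | hfg
    · exact Or.inr (Or.inl hef)
    · exact Or.inr (Or.inl (hef.trans hfg))
    · rcases eq_or_eq_of_target_eq_of_source_eq hB hF hef hfg.symm with rfl | rfl
      exacts [Or.inr (Or.inr hfg), Or.inr (Or.inl hef)]
    · exact Or.inr (Or.inr hef)
    · rcases eq_or_eq_of_target_eq_of_source_eq hB hF hfg.symm hef with rfl | rfl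
      exacts [Or.inr (Or.inr hef), Or.inr (Or.inl hfg)]
    · exact Or.inr (Or.inr (hef.trans hfg))

def linkPartition (hB : ¬G.HasPatternB) (hF : G.IsForestD) : Finpartition (univ : Finset G.E) :=
  Finpartition.ofSetoid ⟨G.Linked, linked_equivalence hB hF⟩

theorem part_linkPartition_eq_iff (hB : ¬G.HasPatternB) (hF : G.IsForestD) {e f : G.E} :
    (linkPartition hB hF).part e = (linkPartition hB hF).part f ↔ G.Linked e f := by
  rw [← Finpartition.mem_part_iff_part_eq_part _ (mem_univ e) (mem_univ f), linkPartition,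
    Finpartition.mem_part_ofSetoid_iff_rel]
  exact ⟨(linked_equivalence hB hF).symm, (linked_equivalence hB hF).symm⟩

theorem isMultipath_iff_injOn (hB : ¬G.HasPatternB) (hF : G.IsForestD) {m : Finset G.E} :
    G.IsMultipath m ↔ Set.InjOn (linkPartition hB hF).part m := by
  simp only [Set.InjOn, mem_coe, part_linkPartition_eq_iff]
  constructor
  · rintro ⟨-, hs, ht, -⟩ e he f hf (h | h | h)
    exacts [h, ht e he f hf h, hs e he f hf h]
  · intro h
    exact ⟨fun e _ => hF.loopless e, fun e he f hf hsf => h he hf (Or.inr (Or.inr hsf)),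
      fun e he f hf htf => h he hf (Or.inr (Or.inl htf)),
      fun ⟨c, hc, _⟩ => hF.not_isCohCycle c hc⟩

theorem mrank_eq_card_filter (hB : ¬G.HasPatternB) (hF : G.IsForestD) (A : Finset G.E) :
    G.mrank A = #{C ∈ (linkPartition hB hF).parts | (A ∩ C).Nonempty} := by
  rw [← Finpartition.image_part_eq_filter _ (subset_univ A),
    ← sup_card_filter_injOn_eq_card_image, mrank]
  congr 1
  exact filter_congr fun m _ => isMultipath_iff_injOn hB hF

theorem mrank_univ_eq_card_parts (hB : ¬G.HasPatternB) (hF : G.IsForestD) :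
    G.mrank univ = #(linkPartition hB hF).parts := by
  rw [mrank_eq_card_filter hB hF, filter_true_of_mem fun C hC => ?_]
  rw [univ_inter]
  exact (linkPartition hB hF).nonempty_of_mem_parts hC

theorem tutte_zero_eq_pow (hB : ¬G.HasPatternB) (hF : G.IsForestD) (x : ℤ) :
    G.tutte x 0 = x ^ #(linkPartition hB hF).parts := by
  rw [tutte, mrank_univ_eq_card_parts hB hF, ← powerset_univ, zero_sub]
  simp_rw [mrank_eq_card_filter hB hF]
  exact (linkPartition hB hF).sum_powerset_tutte_eq_pow x

theorem hasUndirCycle_of_joins_cycle {n : ℕ} (hn : 0 < n) (vx : Fin n → G.V) (ed : Fin n → G.E)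
    (hvx : Function.Injective vx)
    (hjoin : ∀ a : Fin n, G.Joins (ed a) (vx a) (vx ⟨(a + 1) % n, Nat.mod_lt _ hn⟩))
    (hback : ∀ a b : Fin n, b.val = a.val + 1 → ed b ≠ ed a) : G.HasUndirCycle := by
  refine ⟨n, ed, vx, hn, fun a b hab => ?_, hvx, hjoin⟩
  by_contra hne
  have hne' : a.val ≠ b.val := fun h => hne (Fin.ext h)
  rcases (hjoin a).eq_and_eq_or_eq_and_eq (hab ▸ hjoin b) with ⟨h, -⟩ | ⟨h₁, h₂⟩
  · exact hne (hvx h)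
  have hsucc : ∀ c < n, (c + 1) % n = if c + 1 = n then 0 else c + 1 := by
    intro c hc
    split_ifs with h
    · rw [h, Nat.mod_self]
    · exact Nat.mod_eq_of_lt (by omega)
  have e₁ := congrArg Fin.val (hvx h₁)
  have e₂ := congrArg Fin.val (hvx h₂)
  simp only [hsucc _ a.2, hsucc _ b.2] at e₁ e₂
  have hadj : b.val = a.val + 1 ∨ a.val = b.val + 1 := by split_ifs at e₁ e₂ <;> omega
  rcases hadj with h | h
  exacts [hback a b h hab.symm, hback b a h hab]

theorem hasUndirCycle_of_walk (v : ℕ → G.V) (ed : ℕ → G.E)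
    (hjoin : ∀ n, G.Joins (ed n) (v n) (v (n + 1))) (hback : ∀ n, ed (n + 1) ≠ ed n) :
    G.HasUndirCycle := by
  have hrep : ∃ j, ∃ i < j, v i = v j := by
    obtain ⟨a, b, hab, h⟩ := Finite.exists_ne_map_eq_of_infinite v
    rcases hab.lt_or_gt with hab | hab
    exacts [⟨b, a, hab, h⟩, ⟨a, b, hab, h.symm⟩]
  obtain ⟨i, hij, hvij⟩ := Nat.find_spec hrep
  set j := Nat.find hrep
  have hinj : ∀ p < j, ∀ q < j, v p = v q → p = q := by
    intro p hp q hq hpq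
    by_contra hne
    rcases Nat.lt_or_gt_of_ne hne with h | h
    exacts [Nat.find_min hrep hq ⟨p, h, hpq⟩, Nat.find_min hrep hp ⟨q, h, hpq.symm⟩]
  -- the first repetition `v i = v j` closes the cycle `v i, …, v (j - 1)`
  refine hasUndirCycle_of_joins_cycle (n := j - i) (by omega) (fun a => v (i + a))
    (fun a => ed (i + a)) (fun a b h => Fin.ext ?_) (fun a => ?_) (fun a b hab => ?_)
  · have := hinj _ (by omega) _ (by omega) h
    omega
  · rcases Nat.lt_or_ge (a + 1) (j - i) with h | h
    · simp only [Nat.mod_eq_of_lt h]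
      exact hjoin (i + a)
    · simp only [show a.val + 1 = j - i by omega, Nat.mod_self, add_zero]
      have hj : i + a + 1 = j := by omega
      simpa [hvij, hj] using hjoin (i + a)
  · simpa [hab, ← add_assoc] using hback (i + a)

theorem IsForestD.exists_leaf (hF : G.IsForestD) (e₀ : G.E) :
    ∃ (w z : G.V) (e : G.E), G.Joins e w z ∧ z ≠ w ∧ ∀ f ≠ e, G.s f ≠ w ∧ G.t f ≠ w := by
  by_contra hno
  have hstep : ∀ e w, G.s e = w ∨ G.t e = w → ∃ f ≠ e, ∃ z, G.Joins f w z := by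
    intro e w hw
    by_contra! h
    obtain ⟨z, hz⟩ : ∃ z, G.Joins e w z :=
      hw.elim (fun h => ⟨G.t e, Or.inl ⟨h, rfl⟩⟩) (fun h => ⟨G.s e, Or.inr ⟨h, rfl⟩⟩)
    have hzw : z ≠ w := by
      rintro rfl
      rcases hz with ⟨h1, h2⟩ | ⟨h1, h2⟩ <;> exact hF.loopless e (by rw [h1, h2])
    exact hno ⟨w, z, e, hz, hzw, fun f hf =>
      ⟨fun hs => h f hf (G.t f) (Or.inl ⟨hs, rfl⟩), fun ht => h f hf (G.s f) (Or.inr ⟨ht, rfl⟩)⟩⟩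
  choose! next hnext z hz using hstep
  let σ : ℕ → G.E × G.V := fun n =>
    Nat.rec (e₀, G.s e₀) (fun _ p => (next p.1 p.2, z p.1 p.2)) n
  have hσ : ∀ n, G.s (σ n).1 = (σ n).2 ∨ G.t (σ n).1 = (σ n).2 := by
    intro n
    induction n with
    | zero => exact Or.inl rfl
    | succ n ih =>
      rcases hz _ _ ih with ⟨-, h⟩ | ⟨-, h⟩
      exacts [Or.inr h, Or.inl h]
  exact hF <| hasUndirCycle_of_walk (fun n => (σ n).2) (fun n => (σ (n + 1)).1)
    (fun n => hz _ _ (hσ n)) (fun n => hnext _ _ (hσ (n + 1)))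

abbrev deleteLeaf (G : DiGraph) (w : G.V) (e : G.E) (hA : ∀ f ≠ e, G.s f ≠ w ∧ G.t f ≠ w) :
    DiGraph where
  V := {v : G.V // v ≠ w}
  E := {f : G.E // f ≠ e}
  s f := ⟨G.s f.1, (hA f.1 f.2).1⟩
  t f := ⟨G.t f.1, (hA f.1 f.2).2⟩

abbrev reverse (G : DiGraph) : DiGraph where
  V := G.V
  E := G.E
  s := G.t
  t := G.s

theorem isFlowing_reverse_iff {k : ℕ} {c : G.V → Fin k} :
    G.reverse.IsFlowing k c ↔ G.IsFlowing k c :=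
  ⟨fun h => ⟨fun e => (h.1 e).symm, h.2.2, h.2.1⟩, fun h => ⟨fun e => (h.1 e).symm, h.2.2, h.2.1⟩⟩

theorem tau_reverse (k : ℕ) : G.reverse.tau k = G.tau k :=
  Nat.card_congr (Equiv.subtypeEquivRight fun _ => isFlowing_reverse_iff)

theorem linked_reverse_iff {e f : G.E} : G.reverse.Linked e f ↔ G.Linked e f := by
  simp only [Linked]
  tauto

section DeleteLeaf

variable {w : G.V} {e : G.E} (hA : ∀ f ≠ e, G.s f ≠ w ∧ G.t f ≠ w)

theorem card_E_deleteLeaf : Fintype.card (G.deleteLeaf w e hA).E = Fintype.card G.E - 1 := by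
  have h := Fintype.card_subtype_compl (fun f : G.E => f = e)
  simp only [Fintype.card_subtype_eq] at h
  exact h

theorem not_hasPatternB_deleteLeaf (hB : ¬G.HasPatternB) : ¬(G.deleteLeaf w e hA).HasPatternB := by
  rintro ⟨v₀, v₁, v₂, v₃, h01, h02, h03, h12, h13, h23,
    ⟨e₁, hs₁, ht₁⟩, ⟨e₂, hs₂, ht₂⟩, ⟨e₃, hs₃, ht₃⟩⟩
  exact hB ⟨v₀.1, v₁.1, v₂.1, v₃.1, Subtype.coe_ne_coe.2 h01, Subtype.coe_ne_coe.2 h02,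
    Subtype.coe_ne_coe.2 h03, Subtype.coe_ne_coe.2 h12, Subtype.coe_ne_coe.2 h13,
    Subtype.coe_ne_coe.2 h23, ⟨e₁.1, congrArg Subtype.val hs₁, congrArg Subtype.val ht₁⟩,
    ⟨e₂.1, congrArg Subtype.val hs₂, congrArg Subtype.val ht₂⟩,
    ⟨e₃.1, congrArg Subtype.val hs₃, congrArg Subtype.val ht₃⟩⟩

theorem isForestD_deleteLeaf (hF : G.IsForestD) : (G.deleteLeaf w e hA).IsForestD := by
  rintro ⟨n, ed, vx, hn, hed, hvx, hjoin⟩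
  refine hF ⟨n, fun i => (ed i).1, fun i => (vx i).1, hn, Subtype.val_injective.comp hed,
    Subtype.val_injective.comp hvx, fun i => ?_⟩
  rcases hjoin i with ⟨h1, h2⟩ | ⟨h1, h2⟩
  · exact Or.inl ⟨congrArg Subtype.val h1, congrArg Subtype.val h2⟩
  · exact Or.inr ⟨congrArg Subtype.val h1, congrArg Subtype.val h2⟩

theorem connectedD_deleteLeaf (hT : G.ConnectedD) {z : G.V} (hwz : G.Joins e w z)
    (hzw : z ≠ w) : (G.deleteLeaf w e hA).ConnectedD := by
  let L : G.V → (G.deleteLeaf w e hA).V := fun v => if h : v = w then ⟨z, hzw⟩ else ⟨v, h⟩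
  have hL : ∀ v (h : v ≠ w), L v = ⟨v, h⟩ := fun v h => dif_neg h
  have hLe : ∀ v, v = w ∨ v = z → L v = ⟨z, hzw⟩ := by
    rintro v (rfl | rfl)
    exacts [dif_pos rfl, hL v hzw]
  have hmap : ∀ a b, G.connRel a b → (G.deleteLeaf w e hA).connRel (L a) (L b) := by
    intro a b hab
    induction hab with
    | rel a b hab =>
      obtain ⟨f, hf⟩ := hab
      by_cases hfe : f = e
      · subst hfe
        have hends : ∀ u, G.s f = u ∨ G.t f = u → u = w ∨ u = z := by
          rintro u (rfl | rfl) <;> rcases hwz with ⟨h1, h2⟩ | ⟨h1, h2⟩ <;> simp [h1, h2]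
        rw [hLe a (hends a (by tauto)), hLe b (hends b (by tauto))]
        exact Relation.EqvGen.refl _
      · obtain ⟨hsw, htw⟩ := hA f hfe
        rcases hf with ⟨rfl, rfl⟩ | ⟨rfl, rfl⟩
        · rw [hL _ hsw, hL _ htw]
          exact Relation.EqvGen.rel _ _ ⟨⟨f, hfe⟩, Or.inl ⟨rfl, rfl⟩⟩
        · rw [hL _ hsw, hL _ htw]
          exact Relation.EqvGen.rel _ _ ⟨⟨f, hfe⟩, Or.inr ⟨rfl, rfl⟩⟩
    | refl => exact Relation.EqvGen.refl _
    | symm _ _ _ ih => exact Relation.EqvGen.symm _ _ ih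
    | trans _ _ _ _ _ ih₁ ih₂ => exact Relation.EqvGen.trans _ _ _ ih₁ ih₂
  refine ⟨⟨⟨z, hzw⟩⟩, fun v v' => ?_⟩
  have h := hmap v.1 v'.1 (hT.2 v.1 v'.1)
  rwa [hL v.1 v.2, hL v'.1 v'.2] at h

theorem linked_deleteLeaf_iff {f g : (G.deleteLeaf w e hA).E} :
    (G.deleteLeaf w e hA).Linked f g ↔ G.Linked f.1 g.1 := by
  simp only [Linked, Subtype.ext_iff]

theorem card_parts_linkPartition_deleteLeaf (hB : ¬G.HasPatternB) (hF : G.IsForestD)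
    (hB' : ¬(G.deleteLeaf w e hA).HasPatternB) (hF' : (G.deleteLeaf w e hA).IsForestD) :
    #(linkPartition hB hF).parts =
      #(linkPartition hB' hF').parts + if ∃ f ≠ e, G.Linked e f then 0 else 1 := by
  set P := linkPartition hB hF
  set P' := linkPartition hB' hF'
  have hP' : #P'.parts = #((univ.erase e).image P.part) := by
    have hval : (univ : Finset (G.deleteLeaf w e hA).E).image Subtype.val = univ.erase e := by
      ext f
      simp
    rw [← P'.image_part_self, ← hval, image_image]
    refine card_image_eq_of_eq_iff fun f _ g _ => ?_
    rw [part_linkPartition_eq_iff, Function.comp_apply, Function.comp_apply,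
      part_linkPartition_eq_iff, linked_deleteLeaf_iff]
  have hP : P.parts = insert (P.part e) ((univ.erase e).image P.part) := by
    rw [← image_insert, insert_erase (mem_univ e), P.image_part_self]
  rw [hP, hP']
  split_ifs with h
  · obtain ⟨f, hf, hef⟩ := h
    rw [insert_eq_of_mem (mem_image.2 ⟨f, mem_erase.2 ⟨hf, mem_univ f⟩,
      (part_linkPartition_eq_iff hB hF).2 ((linked_equivalence hB hF).symm hef)⟩), add_zero]
  · refine card_insert_of_notMem fun hmem => h ?_
    obtain ⟨f, hf, hfe⟩ := mem_image.1 hmem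
    exact ⟨f, (mem_erase.1 hf).1, (part_linkPartition_eq_iff hB hF).1 hfe.symm⟩

theorem isFlowing_iff_of_source_eq (hs : G.s e = w) {k : ℕ} (c : G.V → Fin k) :
    G.IsFlowing k c ↔ (G.deleteLeaf w e hA).IsFlowing k (fun v => c v) ∧ c w ≠ c (G.t e) ∧
      ∀ f : (G.deleteLeaf w e hA).E, G.t f.1 = G.t e → c (G.s f.1) = c w := by
  constructor
  · rintro ⟨h₁, h₂, h₃⟩
    exact ⟨⟨fun f => h₁ f.1, fun f g h => h₂ f.1 g.1 (congrArg Subtype.val h),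
      fun f g h => h₃ f.1 g.1 (congrArg Subtype.val h)⟩, hs ▸ h₁ e, fun f hf => hs ▸ h₂ f.1 e hf⟩
  · rintro ⟨⟨h₁, h₂, h₃⟩, hw, hlink⟩
    have hs' : ∀ f ≠ e, G.s f ≠ G.s e := fun f hf => hs ▸ (hA f hf).1
    refine ⟨fun f => ?_, fun f g hfg => ?_, fun f g hfg => ?_⟩
    · by_cases hf : f = e
      · rwa [hf, hs]
      · exact h₁ ⟨f, hf⟩
    · by_cases hf : f = e <;> by_cases hg : g = e
      · rw [hf, hg]
      · rw [hf, hs, hlink ⟨g, hg⟩ (hfg.symm.trans (congrArg G.t hf))]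
      · rw [hg, hs, hlink ⟨f, hf⟩ (hfg.trans (congrArg G.t hg))]
      · exact h₂ ⟨f, hf⟩ ⟨g, hg⟩ (Subtype.ext hfg)
    · by_cases hf : f = e <;> by_cases hg : g = e
      · rw [hf, hg]
      · exact absurd (hfg.symm.trans (congrArg G.s hf)) (hs' g hg)
      · exact absurd (hfg.trans (congrArg G.s hg)) (hs' f hf)
      · exact h₃ ⟨f, hf⟩ ⟨g, hg⟩ (Subtype.ext hfg)

theorem card_leaf_colours_of_source_eq (hs : G.s e = w) (hz : G.t e ≠ w) {k : ℕ}
    (c' : (G.deleteLeaf w e hA).V → Fin k) (hc' : (G.deleteLeaf w e hA).IsFlowing k c') :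
    Nat.card {x // x ≠ c' ⟨G.t e, hz⟩ ∧ ∀ f : (G.deleteLeaf w e hA).E,
      G.t f.1 = G.t e → c' ((G.deleteLeaf w e hA).s f) = x} =
      if ∃ f ≠ e, G.Linked e f then 1 else k - 1 := by
  rw [Nat.card_eq_fintype_card, Fintype.card_subtype]
  split_ifs with hlink
  · obtain ⟨f₀, hf₀, hlinked⟩ := hlink
    have ht₀ : G.t f₀ = G.t e := by
      rcases hlinked with h | h | h
      exacts [absurd h.symm hf₀, h.symm, absurd (h.symm.trans hs) (hA f₀ hf₀).1]
    have hfilter : univ.filter (fun x => x ≠ c' ⟨G.t e, hz⟩ ∧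
        ∀ f : (G.deleteLeaf w e hA).E, G.t f.1 = G.t e → c' ((G.deleteLeaf w e hA).s f) = x) =
        {c' ((G.deleteLeaf w e hA).s ⟨f₀, hf₀⟩)} := by
      ext x
      simp only [mem_filter, mem_univ, true_and, mem_singleton]
      constructor
      · exact fun h => (h.2 ⟨f₀, hf₀⟩ ht₀).symm
      · rintro rfl
        refine ⟨?_, fun f hf => hc'.2.1 f ⟨f₀, hf₀⟩ (Subtype.ext (hf.trans ht₀.symm))⟩
        convert hc'.1 ⟨f₀, hf₀⟩ using 2
        exact Subtype.ext ht₀.symm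
    rw [hfilter, card_singleton]
  · have hfilter : univ.filter (fun x => x ≠ c' ⟨G.t e, hz⟩ ∧
        ∀ f : (G.deleteLeaf w e hA).E, G.t f.1 = G.t e → c' ((G.deleteLeaf w e hA).s f) = x) =
        univ.erase (c' ⟨G.t e, hz⟩) := by
      ext x
      simp only [mem_filter, mem_univ, true_and, mem_erase, and_true, and_iff_left_iff_imp]
      exact fun _ f hf => absurd ⟨f.1, f.2, Or.inr (Or.inl hf.symm)⟩ hlink
    rw [hfilter, card_erase_of_mem (mem_univ _), card_univ, Fintype.card_fin]

theorem tau_deleteLeaf_of_source_eq (hs : G.s e = w) (hz : G.t e ≠ w) (k : ℕ) :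
    G.tau k = (G.deleteLeaf w e hA).tau k * if ∃ f ≠ e, G.Linked e f then 1 else k - 1 := by
  set G' := G.deleteLeaf w e hA
  calc G.tau k = Nat.card {p : Fin k × (G'.V → Fin k) // G'.IsFlowing k p.2 ∧
        (p.1 ≠ p.2 ⟨G.t e, hz⟩ ∧ ∀ f : G'.E, G.t f.1 = G.t e → p.2 (G'.s f) = p.1)} :=
      Nat.card_congr ((Equiv.funSplitAt w (Fin k)).subtypeEquiv
        fun c => isFlowing_iff_of_source_eq hA hs c)
    _ = _ := Nat.card_subtype_prod_eq_mul _ _ (card_leaf_colours_of_source_eq hA hs hz)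

theorem tau_deleteLeaf {z : G.V} (hwz : G.Joins e w z) (hzw : z ≠ w) (k : ℕ) :
    G.tau k = (G.deleteLeaf w e hA).tau k * if ∃ f ≠ e, G.Linked e f then 1 else k - 1 := by
  rcases hwz with ⟨hs, ht⟩ | ⟨ht, hs⟩
  · exact tau_deleteLeaf_of_source_eq hA hs (ht ▸ hzw) k
  · have hA' : ∀ f ≠ e, G.reverse.s f ≠ w ∧ G.reverse.t f ≠ w := fun f hf => (hA f hf).symm
    have h := tau_deleteLeaf_of_source_eq (G := G.reverse) hA' ht
      (show G.s e ≠ w from hs ▸ hzw) k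
    simp only [linked_reverse_iff] at h
    rw [← tau_reverse, h, ← tau_reverse (G := G.deleteLeaf w e hA)]

end DeleteLeaf

theorem tau_of_isEmpty (hE : IsEmpty G.E) (hT : G.ConnectedD) (k : ℕ) : G.tau k = k := by
  have hsub : ∀ v v' : G.V, v = v' := fun v v' => by
    induction hT.2 v v' with
    | rel _ _ h => exact (hE.false h.choose).elim
    | refl => rfl
    | symm _ _ _ ih => exact ih.symm
    | trans _ _ _ _ _ ih₁ ih₂ => exact ih₁.trans ih₂
  have : Unique G.V := { default := hT.1.some, uniq := fun v => hsub v _ }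
  rw [tau, Nat.card_congr (Equiv.subtypeUnivEquiv fun c => ⟨hE.elim, fun f => hE.elim f,
    fun f => hE.elim f⟩), Nat.card_fun, Nat.card_unique (α := G.V), pow_one,
    Nat.card_eq_fintype_card, Fintype.card_fin]

theorem card_parts_linkPartition_of_isEmpty (hE : IsEmpty G.E) (hB : ¬G.HasPatternB)
    (hF : G.IsForestD) : #(linkPartition hB hF).parts = 0 := by
  have h := (linkPartition hB hF).card_parts_le_card
  rwa [card_univ, Fintype.card_eq_zero, Nat.le_zero] at h

theorem tau_eq_of_isTreeD (G : DiGraph) (hB : ¬G.HasPatternB) (hT : G.IsTreeD) (k : ℕ) :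
    G.tau k = k * (k - 1) ^ #(linkPartition hB hT.2).parts := by
  induction h : Fintype.card G.E generalizing G with
  | zero =>
    have hE : IsEmpty G.E := Fintype.card_eq_zero_iff.1 h
    rw [tau_of_isEmpty hE hT.1, card_parts_linkPartition_of_isEmpty hE, pow_zero, mul_one]
  | succ n ih =>
    obtain ⟨e₀⟩ : Nonempty G.E := Fintype.card_pos_iff.1 (by omega)
    obtain ⟨w, z, e, hwz, hzw, hA⟩ := hT.2.exists_leaf e₀
    have hB' := not_hasPatternB_deleteLeaf hA hB
    have hT' : (G.deleteLeaf w e hA).IsTreeD :=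
      ⟨connectedD_deleteLeaf hA hT.1 hwz hzw, isForestD_deleteLeaf hA hT.2⟩
    have hn : Fintype.card (G.deleteLeaf w e hA).E = n := by rw [card_E_deleteLeaf, h]; rfl
    rw [tau_deleteLeaf hA hwz hzw, ih _ hB' hT' hn,
      card_parts_linkPartition_deleteLeaf hA hB hT.2 hB' hT'.2]
    split_ifs <;> ring

end DiGraph

theorem tutte_flowing_colourings_tree_general (G : DiGraph)
    (hMP : G.IsMPDigraph) (htree : G.IsTreeD) (k : ℕ) :
    (k : ℤ) * G.tutte (1 - (k : ℤ)) 0 =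
      (-1 : ℤ) ^ (G.mrank Finset.univ) * (G.tau k : ℤ) := by
  have hB : ¬G.HasPatternB := hMP.1.2.2.1
  rw [DiGraph.tutte_zero_eq_pow hB htree.2, DiGraph.mrank_univ_eq_card_parts hB htree.2,
    DiGraph.tau_eq_of_isTreeD G hB htree k]
  rcases k with _ | k
  · simp
  · rw [show (1 : ℤ) - (k + 1 : ℕ) = -1 * k by push_cast; ring, mul_pow]
    push_cast [Nat.add_sub_cancel]
    ring

/-- For an MP-tree `G` and every integer `k ≥ 0`,
`k · T_{M_G}(1-k, 0) = (-1)^{r(G)} · τ_G(k)`. -/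
theorem tutte_flowing_colourings_tree (G : DiGraph) (hU : G.EdgeUnique)
    (hMP : G.IsMPDigraph) (htree : G.IsTreeD) (k : ℕ) :
    (k : ℤ) * G.tutte (1 - (k : ℤ)) 0 =
      (-1 : ℤ) ^ (G.mrank Finset.univ) * (G.tau k : ℤ) :=
  tutte_flowing_colourings_tree_general G hMP htree k
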